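/- Let C be a G-graded coalgebra. Define on the vector space C ⊗ kG the comultiplication Δ(c ⋊ g) = Σ (c₁ ⋊ δ(c₂)g) ⊗ (c₂ ⋊ g) for homogeneous c (where δ(c₂) denotes the degree of the homogeneous component c₂ and Sweedler summands are taken homogeneous) and counit ε(c ⋊ g) = ε_C(c). Then C ⋊ kG is a coassociative counital coalgebra, and the map F: C ⋊ kG → C, c ⋊ g ↦ c, is a surjective coalgebra homomorphism. -/

import Mathlib

/-!
Every element of `C ⋊ kG` is a sum of elements `c ⋊ g`, and `Δ(c ⋊ g) = Φ_g(Δc)` with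
`Φ_g(a ⊗ b) = (a ⋊ δ(b)g) ⊗ (b ⋊ g)` for homogeneous `b`. Each axiom therefore reduces to an
identity between linear maps out of `C ⊗ C`, which it suffices to check on `a ⊗ b` with `b`
homogeneous. For coassociativity, both sides at `c ⋊ g` are the images of the two sides of
coassociativity in `C` under a single map `C ⊗ C ⊗ C → (C ⋊ kG)^{⊗3}`, which attaches to each
tensor factor `g` times the degrees of the factors to its right. On the right-hand side this
needs `δ(b₁)δ(b₂) = δ(b)` for the homogeneous Sweedler summands of `Δb`, which is the grading
condition on `Δ`. The right counit law uses `ε(C_h) = 0` for `h ≠ 1`.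
-/

open TensorProduct DirectSum

noncomputable section
open scoped Classical

variable (k : Type*) [Field k] (G : Type*) [Group G]
variable (C : Type*) [AddCommGroup C] [Module k C]

/-- The group coalgebra `kG`: the free module on `G`, with group-like basis. -/
abbrev kGrp : Type _ := G →₀ k

/-- Comultiplication of `kG`: every `g ∈ G` is group-like. -/
def deltaKG : kGrp k G →ₗ[k] kGrp k G ⊗[k] kGrp k G :=
  Finsupp.lsum k fun g =>
    LinearMap.toSpanSingleton k _
      ((Finsupp.single g 1 : kGrp k G) ⊗ₜ[k] (Finsupp.single g 1 : kGrp k G))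

/-- Counit of `kG`. -/
def epsKG : kGrp k G →ₗ[k] k := Finsupp.lsum k fun _ => LinearMap.id

/-- Right multiplication by the group element `h` on `kG`. -/
def mulKG (h : G) : kGrp k G →ₗ[k] kGrp k G :=
  Finsupp.lsum k fun g => Finsupp.lsingle (g * h)

/-- The map `C → C ⊗ kG`, `c ↦ c ⊗ g`. -/
def tmulKG (g : G) : C →ₗ[k] C ⊗[k] kGrp k G :=
  (TensorProduct.mk k C (kGrp k G)).flip (Finsupp.single g 1)

variable (ℭ : G → Submodule k C) [Decomposition ℭ]

/-- The comodule structure map `ρ : C → C ⊗ kG` encoding the grading: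
`ρ(c) = c ⊗ δ(c)` for `c` homogeneous of degree `δ(c)`. -/
def rhoC : C →ₗ[k] C ⊗[k] kGrp k G :=
  (DirectSum.toModule k G (C ⊗[k] kGrp k G) fun g =>
      (tmulKG k G C g).comp (ℭ g).subtype).comp
    (DirectSum.decomposeLinearEquiv ℭ).toLinearMap

/-- The value of the smash comultiplication in degree `g`:
`c ↦ Σ (c₁ ⋊ δ(c₂)g) ⊗ (c₂ ⋊ g)`, for a comultiplication `Δc` on `C`. -/
def smashDg (Δc : C →ₗ[k] C ⊗[k] C) (g : G) :
    C →ₗ[k] (C ⊗[k] kGrp k G) ⊗[k] (C ⊗[k] kGrp k G) :=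
  (TensorProduct.map
      (TensorProduct.map LinearMap.id (mulKG k G g))
      (tmulKG k G C g)).comp
    (((TensorProduct.assoc k C (kGrp k G) C).symm.toLinearMap).comp
      ((TensorProduct.map LinearMap.id (TensorProduct.comm k C (kGrp k G)).toLinearMap).comp
        ((TensorProduct.map LinearMap.id (rhoC k G C ℭ)).comp Δc)))

/-- The comultiplication of the smash coproduct coalgebra `C ⋊ kG`:
`Δ(c ⋊ g) = Σ (c₁ ⋊ δ(c₂)g) ⊗ (c₂ ⋊ g)` for homogeneous `c`. -/
def smashDeltaC (Δc : C →ₗ[k] C ⊗[k] C) :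
    C ⊗[k] kGrp k G →ₗ[k] (C ⊗[k] kGrp k G) ⊗[k] (C ⊗[k] kGrp k G) :=
  (Finsupp.lsum k fun g => smashDg k G C ℭ Δc g).comp
    (TensorProduct.finsuppScalarRight k k C G).toLinearMap

/-- The counit of `C ⋊ kG`: `ε(c ⋊ g) = ε_C(c)`. -/
def smashEpsC (εc : C →ₗ[k] k) : C ⊗[k] kGrp k G →ₗ[k] k :=
  (TensorProduct.lid k k).toLinearMap.comp (TensorProduct.map εc (epsKG k G))

/-- The canonical projection `F : C ⋊ kG → C`, `c ⋊ g ↦ c`. -/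
def smashProjC : C ⊗[k] kGrp k G →ₗ[k] C :=
  (TensorProduct.rid k C).toLinearMap.comp (TensorProduct.map LinearMap.id (epsKG k G))

/-- The span of elementary tensors from two submodules: the image of `A ⊗ B`
in `M ⊗ N`. -/
def tsub {M N : Type*} [AddCommGroup M] [Module k M] [AddCommGroup N] [Module k N]
    (A : Submodule k M) (B : Submodule k N) : Submodule k (M ⊗[k] N) :=
  Submodule.span k {x | ∃ a ∈ A, ∃ b ∈ B, x = a ⊗ₜ[k] b}

theorem TensorProduct.ext_homogeneous {R M N P ι : Type*} [CommSemiring R] [DecidableEq ι]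
    [AddCommMonoid M] [AddCommMonoid N] [AddCommMonoid P] [Module R M] [Module R N] [Module R P]
    (𝒜 : ι → Submodule R N) [Decomposition 𝒜] {f f' : M ⊗[R] N →ₗ[R] P}
    (h : ∀ (m : M) (i : ι), ∀ n ∈ 𝒜 i, f (m ⊗ₜ n) = f' (m ⊗ₜ n)) : f = f' := by
  refine TensorProduct.ext' fun m n => ?_
  induction n using Decomposition.inductionOn 𝒜 with
  | zero => simp
  | homogeneous n => exact h m _ n n.2
  | add n n' hn hn' => simp only [tmul_add, map_add, hn, hn']

theorem TensorProduct.ext_tmul_single {R M P α : Type*} [CommSemiring R]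
    [AddCommMonoid M] [AddCommMonoid P] [Module R M] [Module R P]
    {f f' : M ⊗[R] (α →₀ R) →ₗ[R] P}
    (h : ∀ (m : M) (a : α), f (m ⊗ₜ Finsupp.single a 1) = f' (m ⊗ₜ Finsupp.single a 1)) :
    f = f' :=
  TensorProduct.ext <| LinearMap.ext fun m => Finsupp.lhom_ext' fun a => LinearMap.ext_ring (h m a)

theorem iSup_tsub_le {M N ι : Type*} [Mul ι] [AddCommGroup M] [Module k M] [AddCommGroup N]
    [Module k N] (𝒜 : ι → Submodule k M) (ℬ : ι → Submodule k N) (i : ι)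
    (p : Submodule k (M ⊗[k] N)) (h : ∀ a b, a * b = i → ∀ x ∈ 𝒜 a, ∀ y ∈ ℬ b, x ⊗ₜ y ∈ p) :
    ⨆ (ab : ι × ι) (_ : ab.1 * ab.2 = i), tsub k (𝒜 ab.1) (ℬ ab.2) ≤ p :=
  iSup₂_le fun ab hab => Submodule.span_le.mpr <| by
    rintro _ ⟨x, hx, y, hy, rfl⟩
    exact h _ _ hab x hx y hy

theorem mulKG_single (h g : G) (r : k) :
    mulKG k G h (Finsupp.single g r) = Finsupp.single (g * h) r := by
  simp [mulKG]

omit [Group G] in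
theorem rhoC_of_mem {g : G} {c : C} (hc : c ∈ ℭ g) :
    rhoC k G C ℭ c = c ⊗ₜ Finsupp.single g 1 := by
  simp only [rhoC, LinearMap.comp_apply, LinearEquiv.coe_coe, decomposeLinearEquiv_apply,
    decompose_of_mem ℭ hc, ← lof_eq_of k, toModule_lof]
  rfl

omit [Group G] in
theorem smashEpsC_tmul_single (εc : C →ₗ[k] k) (c : C) (g : G) :
    smashEpsC k G C εc (c ⊗ₜ Finsupp.single g 1) = εc c := by
  simp [smashEpsC, epsKG]

omit [Group G] in
theorem smashProjC_tmul_single (c : C) (g : G) :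
    smashProjC k G C (c ⊗ₜ Finsupp.single g 1) = c := by
  simp [smashProjC, epsKG]

theorem smashProjC_surjective : Function.Surjective (smashProjC k G C) :=
  fun c => ⟨c ⊗ₜ Finsupp.single 1 1, smashProjC_tmul_single k G C c 1⟩

def smashPhi (g : G) : C ⊗[k] C →ₗ[k] (C ⊗[k] kGrp k G) ⊗[k] (C ⊗[k] kGrp k G) :=
  TensorProduct.map (TensorProduct.map LinearMap.id (mulKG k G g)) (tmulKG k G C g) ∘ₗ
    (TensorProduct.assoc k C (kGrp k G) C).symm.toLinearMap ∘ₗ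
    TensorProduct.map LinearMap.id (TensorProduct.comm k C (kGrp k G)).toLinearMap ∘ₗ
    TensorProduct.map LinearMap.id (rhoC k G C ℭ)

theorem smashPhi_tmul_of_mem {h : G} {b : C} (hb : b ∈ ℭ h) (g : G) (a : C) :
    smashPhi k G C ℭ g (a ⊗ₜ b)
      = (a ⊗ₜ Finsupp.single (h * g) 1) ⊗ₜ (b ⊗ₜ Finsupp.single g 1) := by
  simp [smashPhi, rhoC_of_mem k G C ℭ hb, mulKG_single, tmulKG]

theorem smashDeltaC_tmul_single (Δc : C →ₗ[k] C ⊗[k] C) (c : C) (g : G) :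
    smashDeltaC k G C ℭ Δc (c ⊗ₜ Finsupp.single g 1) = smashPhi k G C ℭ g (Δc c) := by
  rw [smashDeltaC, LinearMap.comp_apply, LinearEquiv.coe_coe, finsuppScalarRight_apply_tmul,
    Finsupp.sum_single_index (by simp), one_smul, Finsupp.lsum_single]
  rfl

def smashPhiKG : (C ⊗[k] C) ⊗[k] kGrp k G →ₗ[k] (C ⊗[k] kGrp k G) ⊗[k] (C ⊗[k] kGrp k G) :=
  Finsupp.lsum k (smashPhi k G C ℭ) ∘ₗ (finsuppScalarRight k k (C ⊗[k] C) G).toLinearMap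

theorem smashPhiKG_tmul_single (y : C ⊗[k] C) (g : G) :
    smashPhiKG k G C ℭ (y ⊗ₜ Finsupp.single g 1) = smashPhi k G C ℭ g y := by
  rw [smashPhiKG, LinearMap.comp_apply, LinearEquiv.coe_coe, finsuppScalarRight_apply_tmul,
    Finsupp.sum_single_index (by simp), one_smul, Finsupp.lsum_single]

/-- `c₁ ⊗ c₂ ⊗ c₃ ↦ (c₁ ⋊ δ(c₂)δ(c₃)g) ⊗ (c₂ ⋊ δ(c₃)g) ⊗ (c₃ ⋊ g)`. -/
def smashTriple (g : G) :
    C ⊗[k] (C ⊗[k] C) →ₗ[k]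
      (C ⊗[k] kGrp k G) ⊗[k] ((C ⊗[k] kGrp k G) ⊗[k] (C ⊗[k] kGrp k G)) :=
  (TensorProduct.assoc k _ _ _).toLinearMap ∘ₗ
    LinearMap.rTensor _
      (smashPhiKG k G C ℭ ∘ₗ (TensorProduct.assoc k C C (kGrp k G)).symm.toLinearMap) ∘ₗ
    (TensorProduct.assoc k C _ _).symm.toLinearMap ∘ₗ
    LinearMap.lTensor C (smashPhi k G C ℭ g)

theorem smashTriple_tmul_of_mem {h : G} {z : C} (hz : z ∈ ℭ h) (g : G) (x y : C) :
    smashTriple k G C ℭ g (x ⊗ₜ (y ⊗ₜ z))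
      = TensorProduct.assoc k _ _ _
          (smashPhi k G C ℭ (h * g) (x ⊗ₜ y) ⊗ₜ (z ⊗ₜ Finsupp.single g 1)) := by
  simp [smashTriple, smashPhi_tmul_of_mem k G C ℭ hz, smashPhiKG_tmul_single]

theorem smashPhi_coassoc_left (Δc : C →ₗ[k] C ⊗[k] C) (g : G) :
    (TensorProduct.assoc k _ _ _).toLinearMap ∘ₗ
        TensorProduct.map (smashDeltaC k G C ℭ Δc) LinearMap.id ∘ₗ smashPhi k G C ℭ g
      = smashTriple k G C ℭ g ∘ₗ (TensorProduct.assoc k C C C).toLinearMap ∘ₗ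
          TensorProduct.map Δc LinearMap.id := by
  refine TensorProduct.ext_homogeneous ℭ fun a h b hb => ?_
  simp only [LinearMap.comp_apply, smashPhi_tmul_of_mem k G C ℭ hb, map_tmul,
    smashDeltaC_tmul_single, LinearMap.id_apply, LinearEquiv.coe_coe]
  induction Δc a using TensorProduct.induction_on with
  | zero => simp
  | tmul x y => rw [assoc_tmul, smashTriple_tmul_of_mem k G C ℭ hb]
  | add y y' hy hy' => simp only [add_tmul, map_add, hy, hy']

theorem smashPhi_coassoc_right (Δc : C →ₗ[k] C ⊗[k] C)
    (hgradeΔ : ∀ g : G, ∀ c ∈ ℭ g,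
      Δc c ∈ ⨆ (ab : G × G) (_ : ab.1 * ab.2 = g), tsub k (ℭ ab.1) (ℭ ab.2)) (g : G) :
    TensorProduct.map LinearMap.id (smashDeltaC k G C ℭ Δc) ∘ₗ smashPhi k G C ℭ g
      = smashTriple k G C ℭ g ∘ₗ TensorProduct.map LinearMap.id Δc := by
  refine TensorProduct.ext_homogeneous ℭ fun a h b hb => ?_
  simp only [LinearMap.comp_apply, smashPhi_tmul_of_mem k G C ℭ hb, map_tmul,
    smashDeltaC_tmul_single, LinearMap.id_apply]
  refine iSup_tsub_le k ℭ ℭ h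
    (LinearMap.eqLocus (TensorProduct.mk k _ _ (a ⊗ₜ Finsupp.single (h * g) 1) ∘ₗ
      smashPhi k G C ℭ g) (smashTriple k G C ℭ g ∘ₗ TensorProduct.mk k C _ a)) ?_ (hgradeΔ h b hb)
  rintro h₁ h₂ rfl y hy z hz
  simp [smashTriple_tmul_of_mem k G C ℭ hz, smashPhi_tmul_of_mem k G C ℭ hy,
    smashPhi_tmul_of_mem k G C ℭ hz, mul_assoc]

theorem smashPhi_counit_left (εc : C →ₗ[k] k) (g : G) :
    (TensorProduct.lid k _).toLinearMap ∘ₗ TensorProduct.map (smashEpsC k G C εc) LinearMap.id ∘ₗ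
        smashPhi k G C ℭ g
      = tmulKG k G C g ∘ₗ (TensorProduct.lid k C).toLinearMap ∘ₗ
          TensorProduct.map εc LinearMap.id := by
  refine TensorProduct.ext_homogeneous ℭ fun a h b hb => ?_
  simp [smashPhi_tmul_of_mem k G C ℭ hb, smashEpsC_tmul_single, tmulKG, smul_tmul']

theorem smashPhi_counit_right (εc : C →ₗ[k] k)
    (hgradeε : ∀ g : G, g ≠ 1 → ∀ c ∈ ℭ g, εc c = 0) (g : G) :
    (TensorProduct.rid k _).toLinearMap ∘ₗ TensorProduct.map LinearMap.id (smashEpsC k G C εc) ∘ₗ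
        smashPhi k G C ℭ g
      = tmulKG k G C g ∘ₗ (TensorProduct.rid k C).toLinearMap ∘ₗ
          TensorProduct.map LinearMap.id εc := by
  refine TensorProduct.ext_homogeneous ℭ fun a h b hb => ?_
  obtain rfl | hh := eq_or_ne h 1
  · simp [smashPhi_tmul_of_mem k G C ℭ hb, smashEpsC_tmul_single, tmulKG, smul_tmul']
  · simp [smashPhi_tmul_of_mem k G C ℭ hb, smashEpsC_tmul_single, hgradeε h hh b hb]

theorem map_smashProjC_comp_smashPhi (g : G) :
    TensorProduct.map (smashProjC k G C) (smashProjC k G C) ∘ₗ smashPhi k G C ℭ g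
      = LinearMap.id :=
  TensorProduct.ext_homogeneous ℭ fun a h b hb => by
    simp [smashPhi_tmul_of_mem k G C ℭ hb, smashProjC_tmul_single]

theorem smashDeltaC_coassoc (Δc : C →ₗ[k] C ⊗[k] C)
    (hcoassoc : ∀ c : C,
      (TensorProduct.assoc k C C C) ((TensorProduct.map Δc LinearMap.id) (Δc c))
        = (TensorProduct.map LinearMap.id Δc) (Δc c))
    (hgradeΔ : ∀ g : G, ∀ c ∈ ℭ g,
      Δc c ∈ ⨆ (ab : G × G) (_ : ab.1 * ab.2 = g), tsub k (ℭ ab.1) (ℭ ab.2)) :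
    (TensorProduct.assoc k _ _ _).toLinearMap ∘ₗ
        TensorProduct.map (smashDeltaC k G C ℭ Δc) LinearMap.id ∘ₗ smashDeltaC k G C ℭ Δc
      = TensorProduct.map LinearMap.id (smashDeltaC k G C ℭ Δc) ∘ₗ smashDeltaC k G C ℭ Δc := by
  refine TensorProduct.ext_tmul_single fun c g => ?_
  calc _ = smashTriple k G C ℭ g (TensorProduct.assoc k C C C
        (TensorProduct.map Δc LinearMap.id (Δc c))) := by
          simp only [LinearMap.comp_apply, smashDeltaC_tmul_single]
          exact LinearMap.congr_fun (smashPhi_coassoc_left k G C ℭ Δc g) (Δc c)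
    _ = smashTriple k G C ℭ g (TensorProduct.map LinearMap.id Δc (Δc c)) := by rw [hcoassoc]
    _ = _ := by
          simp only [LinearMap.comp_apply, smashDeltaC_tmul_single]
          exact (LinearMap.congr_fun (smashPhi_coassoc_right k G C ℭ Δc hgradeΔ g) (Δc c)).symm

theorem smashDeltaC_counit_left (Δc : C →ₗ[k] C ⊗[k] C) (εc : C →ₗ[k] k)
    (hcl : ∀ c : C, (TensorProduct.lid k C) ((TensorProduct.map εc LinearMap.id) (Δc c)) = c) :
    (TensorProduct.lid k _).toLinearMap ∘ₗ TensorProduct.map (smashEpsC k G C εc) LinearMap.id ∘ₗ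
        smashDeltaC k G C ℭ Δc = LinearMap.id :=
  TensorProduct.ext_tmul_single fun c g => by
    simp only [LinearMap.comp_apply, smashDeltaC_tmul_single]
    exact (LinearMap.congr_fun (smashPhi_counit_left k G C ℭ εc g) (Δc c)).trans
      (congrArg (tmulKG k G C g) (hcl c))

theorem smashDeltaC_counit_right (Δc : C →ₗ[k] C ⊗[k] C) (εc : C →ₗ[k] k)
    (hcr : ∀ c : C, (TensorProduct.rid k C) ((TensorProduct.map LinearMap.id εc) (Δc c)) = c)
    (hgradeε : ∀ g : G, g ≠ 1 → ∀ c ∈ ℭ g, εc c = 0) :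
    (TensorProduct.rid k _).toLinearMap ∘ₗ TensorProduct.map LinearMap.id (smashEpsC k G C εc) ∘ₗ
        smashDeltaC k G C ℭ Δc = LinearMap.id :=
  TensorProduct.ext_tmul_single fun c g => by
    simp only [LinearMap.comp_apply, smashDeltaC_tmul_single]
    exact (LinearMap.congr_fun (smashPhi_counit_right k G C ℭ εc hgradeε g) (Δc c)).trans
      (congrArg (tmulKG k G C g) (hcr c))

theorem comp_smashProjC (Δc : C →ₗ[k] C ⊗[k] C) :
    Δc ∘ₗ smashProjC k G C
      = TensorProduct.map (smashProjC k G C) (smashProjC k G C) ∘ₗ smashDeltaC k G C ℭ Δc :=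
  TensorProduct.ext_tmul_single fun c g => by
    rw [LinearMap.comp_apply, LinearMap.comp_apply, smashDeltaC_tmul_single,
      smashProjC_tmul_single]
    exact (LinearMap.congr_fun (map_smashProjC_comp_smashPhi k G C ℭ g) (Δc c)).symm

omit [Group G] in
theorem counit_comp_smashProjC (εc : C →ₗ[k] k) :
    εc ∘ₗ smashProjC k G C = smashEpsC k G C εc :=
  TensorProduct.ext_tmul_single fun c g => by
    rw [LinearMap.comp_apply, smashProjC_tmul_single, smashEpsC_tmul_single]

theorem smash_coproduct_is_coalgebra
    (Δc : C →ₗ[k] C ⊗[k] C) (εc : C →ₗ[k] k)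
    -- `C` is a coassociative counital coalgebra
    (hcoassoc : ∀ c : C,
      (TensorProduct.assoc k C C C) ((TensorProduct.map Δc LinearMap.id) (Δc c))
        = (TensorProduct.map LinearMap.id Δc) (Δc c))
    (hcl : ∀ c : C, (TensorProduct.lid k C) ((TensorProduct.map εc LinearMap.id) (Δc c)) = c)
    (hcr : ∀ c : C, (TensorProduct.rid k C) ((TensorProduct.map LinearMap.id εc) (Δc c)) = c)
    -- the decomposition `C = ⊕_g C_g` is a coalgebra grading
    (hgradeΔ : ∀ g : G, ∀ c ∈ ℭ g,
      Δc c ∈ ⨆ (ab : G × G) (_ : ab.1 * ab.2 = g), tsub k (ℭ ab.1) (ℭ ab.2))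
    (hgradeε : ∀ g : G, g ≠ 1 → ∀ c ∈ ℭ g, εc c = 0) :
    -- `C ⋊ kG` is a coassociative counital coalgebra
    (∀ x : C ⊗[k] kGrp k G,
      (TensorProduct.assoc k _ _ _)
          ((TensorProduct.map (smashDeltaC k G C ℭ Δc) LinearMap.id)
            (smashDeltaC k G C ℭ Δc x))
        = (TensorProduct.map LinearMap.id (smashDeltaC k G C ℭ Δc))
            (smashDeltaC k G C ℭ Δc x))
    ∧ (∀ x : C ⊗[k] kGrp k G,
        (TensorProduct.lid k _)
          ((TensorProduct.map (smashEpsC k G C εc) LinearMap.id)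
            (smashDeltaC k G C ℭ Δc x)) = x)
    ∧ (∀ x : C ⊗[k] kGrp k G,
        (TensorProduct.rid k _)
          ((TensorProduct.map LinearMap.id (smashEpsC k G C εc))
            (smashDeltaC k G C ℭ Δc x)) = x)
    -- `F` is a surjective coalgebra homomorphism
    ∧ Function.Surjective (smashProjC k G C)
    ∧ (∀ x : C ⊗[k] kGrp k G,
        Δc (smashProjC k G C x)
          = TensorProduct.map (smashProjC k G C) (smashProjC k G C)
              (smashDeltaC k G C ℭ Δc x))
    ∧ (∀ x : C ⊗[k] kGrp k G, εc (smashProjC k G C x) = smashEpsC k G C εc x) :=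
  ⟨LinearMap.congr_fun (smashDeltaC_coassoc k G C ℭ Δc hcoassoc hgradeΔ),
    LinearMap.congr_fun (smashDeltaC_counit_left k G C ℭ Δc εc hcl),
    LinearMap.congr_fun (smashDeltaC_counit_right k G C ℭ Δc εc hcr hgradeε),
    smashProjC_surjective k G C,
    LinearMap.congr_fun (comp_smashProjC k G C ℭ Δc),
    LinearMap.congr_fun (counit_comp_smashProjC k G C εc)⟩
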